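/- arXiv:2402.19253 — 5 statements merged into one kernel-verified Lean document; each statement's English description precedes it below -/
import Mathlib

section
/- For any group G, any 3-cocycle ω ∈ Z³(G, U(1)), and any g ∈ G, the 2-cochain Ω_g(g₁,g₂) = ω(ᵍg₁, ᵍg₂, g)·ω(g, g₁, g₂) / ω(ᵍg₁, g, g₂) satisfies dΩ_g = ω / ω^g, where ω^g(g₁,g₂,g₃) = ω(ᵍg₁, ᵍg₂, ᵍg₃) and ᵍh = ghg⁻¹. -/
/-!
Conjugation by `g` is homotopic to the identity on the bar complex, and `Ω_g` is the prism
operator of that homotopy evaluated on `ω`. Concretely, `dΩ_g · ω^g / ω` is the alternating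
product of the cocycle identity at `(ᵍg₁, ᵍg₂, ᵍg₃, g)`, `(ᵍg₁, ᵍg₂, g, g₃)`, `(ᵍg₁, g, g₂, g₃)` and
`(g, g₁, g₂, g₃)`, once `ᵍx · ᵍy = ᵍ(xy)` and `ᵍx · g = g · x` are used to match their arguments.
-/

/-- A `U(1)`-valued 3-cocycle on a group `G` (trivial action). -/
def IsCocycle3 {G : Type*} [Group G] (ω : G → G → G → Circle) : Prop :=
  ∀ a b c d : G, ω b c d * ω a (b * c) d * ω a b c = ω (a * b) c d * ω a b (c * d)

/-- The 2-cochain `Ω_g(g₁,g₂) = ω(ᵍg₁, ᵍg₂, g)·ω(g, g₁, g₂)/ω(ᵍg₁, g, g₂)`, where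
`ᵍh = ghg⁻¹`. -/
noncomputable def OmegaCochain {G : Type*} [Group G] (ω : G → G → G → Circle) (g g₁ g₂ : G) : Circle :=
  ω (g * g₁ * g⁻¹) (g * g₂ * g⁻¹) g * ω g g₁ g₂ / ω (g * g₁ * g⁻¹) g g₂

/-- for any group `G`, 3-cocycle `ω ∈ Z³(G,U(1))` and `g ∈ G`, the 2-cochain
`Ω_g` satisfies `dΩ_g = ω/ω^g`, i.e. for all `g₁,g₂,g₃`,
`Ω_g(g₂,g₃)·Ω_g(g₁,g₂g₃)·Ω_g(g₁g₂,g₃)⁻¹·Ω_g(g₁,g₂)⁻¹ = ω(g₁,g₂,g₃)/ω(ᵍg₁,ᵍg₂,ᵍg₃)`. -/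
theorem dOmega_eq_omega_div_conj {G : Type*} [Group G] (ω : G → G → G → Circle)
    (hω : IsCocycle3 ω) (g : G) :
    ∀ g₁ g₂ g₃ : G,
      OmegaCochain ω g g₂ g₃ * OmegaCochain ω g g₁ (g₂ * g₃) *
          (OmegaCochain ω g (g₁ * g₂) g₃)⁻¹ * (OmegaCochain ω g g₁ g₂)⁻¹ =
        ω g₁ g₂ g₃ / ω (g * g₁ * g⁻¹) (g * g₂ * g⁻¹) (g * g₃ * g⁻¹) := by
  intro g₁ g₂ g₃
  have e₁ := congrArg Additive.ofMul <| hω (g * g₁ * g⁻¹) (g * g₂ * g⁻¹) (g * g₃ * g⁻¹) g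
  have e₂ := congrArg Additive.ofMul <| hω (g * g₁ * g⁻¹) (g * g₂ * g⁻¹) g g₃
  have e₃ := congrArg Additive.ofMul <| hω (g * g₁ * g⁻¹) g g₂ g₃
  have e₄ := congrArg Additive.ofMul <| hω g g₁ g₂ g₃
  apply Additive.ofMul.injective
  simp only [OmegaCochain, conj_mul, inv_mul_cancel_right, ofMul_mul, ofMul_div, ofMul_inv]
    at e₁ e₂ e₃ e₄ ⊢
  linear_combination (norm := abel) e₁ - e₂ + e₃ - e₄
end

section
/- In Vec_{ℤ/2×ℤ/2} with the toric code braiding, the tensor product algebra A(H₃) ⊗ A(H₂) (group algebra of {1,b} times group algebra of {1,a}, with multiplication twisted by the braiding) is isomorphic to the twisted group algebra A(H₅, ψ), where ψ is the nontrivial 2-cocycle on ℤ/2 × ℤ/2 with ψ(b,a) = ψ(b,c) = ψ(c,a) = ψ(c,c) = −1. -/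
/-- The toric code braiding on grades in `ℤ/2 × ℤ/2` (`a = (1,0)`, `b = (0,1)`,
`c = (1,1)`; `e, m, f` graded by `a, b, c`): `c_{e,m} = c_{f,f} = c_{e,f} = c_{f,m} = −1`,
`+1` otherwise; i.e. `br g h = −1` exactly when `g.1 = 1 ∧ h.2 = 1`. -/
def toricBraiding (g h : ZMod 2 × ZMod 2) : ℂ :=
  if g.1 = 1 ∧ h.2 = 1 then -1 else 1

/-- Structure constants of the braided tensor product algebra `A(H₃) ⊗ A(H₂)`
(`H₃ = {1,b}` first, `H₂ = {1,a}` second): the basis element of total grade `g = (x,y)`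
is `e_y ⊗ e_x`, and `(e_{y₁} ⊗ e_{x₁})(e_{y₂} ⊗ e_{x₂})` picks up the braiding of the
`H₂`-part of the first factor past the `H₃`-part of the second:
`br((x₁,0),(0,y₂))`, i.e. `−1` exactly when `g.1 = 1 ∧ h.2 = 1`. -/
def tensorConst32 (g h : ZMod 2 × ZMod 2) : ℂ :=
  toricBraiding (g.1, 0) (0, h.2)

/-- The nontrivial 2-cocycle `ψ` on `ℤ/2 × ℤ/2` with
`ψ(b,a) = ψ(b,c) = ψ(c,a) = ψ(c,c) = −1` and `ψ = 1` otherwise. -/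
def kleinPsi (g h : ZMod 2 × ZMod 2) : ℂ :=
  if g.2 = 1 ∧ h.1 = 1 then -1 else 1


/-!
Both sets of structure constants are sign bicharacters on `ℤ/2 × ℤ/2`: the braided tensor
product has `(-1) ^ (g₁ h₂)` and `ψ` is `(-1) ^ (g₂ h₁)`. Their ratio `(-1) ^ (g₁ h₂ + g₂ h₁)`
is the coboundary of the quadratic form `q g = g₁ g₂`, so rescaling the basis by `(-1) ^ q`
identifies the two algebras.
-/

section SignOfZModTwo

variable {R : Type*} [Ring R]

lemma neg_one_pow_val_add (a b : ZMod 2) :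
    (-1 : R) ^ (a + b).val = (-1) ^ a.val * (-1) ^ b.val := by
  rw [ZMod.val_add, ← neg_one_pow_eq_pow_mod_two, pow_add]

lemma ite_and_eq_one_eq_neg_one_pow_val_mul (x y : ZMod 2) :
    (if x = 1 ∧ y = 1 then (-1 : R) else 1) = (-1) ^ (x * y).val := by
  match x, y with
  | 0, 0 | 0, 1 | 1, 0 | 1, 1 => simp [ZMod.val_one]

end SignOfZModTwo

lemma tensorConst32_eq_neg_one_pow (g h : ZMod 2 × ZMod 2) :
    tensorConst32 g h = (-1) ^ (g.1 * h.2).val :=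
  ite_and_eq_one_eq_neg_one_pow_val_mul _ _

lemma kleinPsi_eq_neg_one_pow (g h : ZMod 2 × ZMod 2) :
    kleinPsi g h = (-1) ^ (g.2 * h.1).val :=
  ite_and_eq_one_eq_neg_one_pow_val_mul _ _

def kleinRescaling (g : ZMod 2 × ZMod 2) : ℂ :=
  (-1) ^ (g.1 * g.2).val

lemma kleinRescaling_ne_zero (g : ZMod 2 × ZMod 2) : kleinRescaling g ≠ 0 :=
  pow_ne_zero _ (neg_ne_zero.2 one_ne_zero)

lemma kleinRescaling_zero : kleinRescaling 0 = 1 := by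
  simp [kleinRescaling]

lemma fst_mul_snd_add_eq_zmod_two (g h : ZMod 2 × ZMod 2) :
    g.1 * h.2 + (g + h).1 * (g + h).2 = g.1 * g.2 + h.1 * h.2 + g.2 * h.1 := by
  have two_eq_zero : (2 : ZMod 2) = 0 := rfl
  simp only [Prod.fst_add, Prod.snd_add]
  linear_combination (g.1 * h.2) * two_eq_zero

lemma kleinRescaling_mul_mul_kleinPsi (g h : ZMod 2 × ZMod 2) :
    kleinRescaling g * kleinRescaling h * kleinPsi g h
      = tensorConst32 g h * kleinRescaling (g + h) := by
  simp only [kleinRescaling, kleinPsi_eq_neg_one_pow, tensorConst32_eq_neg_one_pow,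
    ← neg_one_pow_val_add, fst_mul_snd_add_eq_zmod_two]

/-- in `Vec_{ℤ/2×ℤ/2}` with the toric code braiding, the braided tensor
product algebra `A(H₃) ⊗ A(H₂)` is isomorphic as a (graded) algebra to the twisted group
algebra `A(H₅, ψ)`.  Such a graded isomorphism is given by nonzero scalars `u g` with
`u 0 = 1` intertwining the structure constants: `u(g)u(h)ψ(g,h) = t(g,h)u(g+h)`. -/
theorem tensor_A3_A2_iso_A5_psi :
    ∃ u : ZMod 2 × ZMod 2 → ℂ, (∀ g, u g ≠ 0) ∧ u 0 = 1 ∧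
      ∀ g h, u g * u h * kleinPsi g h = tensorConst32 g h * u (g + h) :=
  ⟨kleinRescaling, kleinRescaling_ne_zero, kleinRescaling_zero,
    kleinRescaling_mul_mul_kleinPsi⟩
end

section
/- The algebra A = 𝟙 ⊕ f (group algebra of {1,c} inside Vec_{ℤ/2×ℤ/2} with the toric code braiding) satisfies: A ⊗ A (with braided multiplication) is isomorphic as an algebra to the 2×2 matrix algebra concentrated in gradings {1, c}, and hence is Morita equivalent to the trivial algebra 𝟙. -/
/-!
The braided multiplication makes `A ⊗ A` the twisted group algebra of `(ℤ/2)²` generated by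
`|f1⟩` and `|1f⟩`, which square to `1` and anticommute (the sign `c_{f,f} = −1` appears exactly
when `|1f⟩` is moved past `|f1⟩`). The Pauli matrices `X` and `Z` satisfy the same relations,
so `|ij⟩ ↦ X^i Z^j` is multiplicative, and these four matrices form a basis of `M₂(ℂ)`.
Finally `M₂(ℂ)` is Morita equivalent to `ℂ` by `ModuleCat.matrixEquivalence`.
-/

open CategoryTheory

/-- Structure constants of the braided tensor product algebra `A ⊗ A` for
`A = 𝟙 ⊕ f = ℂ[{1,c}]` in `Vec_{ℤ/2×ℤ/2}` with the toric code braiding (`c_{f,f} = −1`):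
the basis is `|ij⟩` with `i,j ∈ {1,f}` encoded by `(i,j) ∈ (ℤ/2)²`, and
`|ij⟩·|kl⟩ = (−2δ_{jk}δ_{j,f}+1)|i+k, j+l⟩`, i.e. the sign is `−1` exactly when
`j = k = f`. -/
def AfAfConst (p q : ZMod 2 × ZMod 2) : ℂ :=
  if p.2 = 1 ∧ q.1 = 1 then -1 else 1

/-- The `ℤ/2×ℤ/2`-grading of the basis element `|ij⟩` of `A ⊗ A`: `i` and `j` are graded
by `1` or `c = (1,1)`, so `|ij⟩` has total grade `(i+j)·c`. -/
def AfAfGrade (p : ZMod 2 × ZMod 2) : ZMod 2 × ZMod 2 :=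
  (p.1 + p.2, p.1 + p.2)

theorem pow_val_mul_pow_val_of_mul_self_eq_one {M : Type*} [Monoid M] {g : M} (hg : g * g = 1)
    (a b : ZMod 2) : g ^ a.val * g ^ b.val = g ^ (a + b).val := by
  rw [ZMod.val_add, ← pow_add, ← pow_eq_pow_mod _ (by rw [sq, hg])]

section AnticommutingInvolutions

variable {R : Type*} [Ring R] [Algebra ℂ R] {x z : R}

theorem pow_val_mul_pow_val_of_anticomm (hzx : z * x = -(x * z)) (b c : ZMod 2) :
    z ^ b.val * x ^ c.val =
      (if b = 1 ∧ c = 1 then (-1 : ℂ) else 1) • (x ^ c.val * z ^ b.val) := by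
  have zmod_two_cases : ∀ a : ZMod 2, a = 0 ∨ a = 1 := by decide
  rcases zmod_two_cases b with rfl | rfl <;> rcases zmod_two_cases c with rfl | rfl <;>
    simp [ZMod.val_one, hzx]

/-- The images of the basis `|ij⟩` under `|f1⟩ ↦ x`, `|1f⟩ ↦ z`. -/
def anticommPairFamily (x z : R) (p : ZMod 2 × ZMod 2) : R := x ^ p.1.val * z ^ p.2.val

theorem anticommPairFamily_mul (hx : x * x = 1) (hz : z * z = 1) (hzx : z * x = -(x * z))
    (p q : ZMod 2 × ZMod 2) :
    anticommPairFamily x z p * anticommPairFamily x z q =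
      AfAfConst p q • anticommPairFamily x z (p + q) := by
  obtain ⟨a, b⟩ := p
  obtain ⟨c, d⟩ := q
  calc x ^ a.val * z ^ b.val * (x ^ c.val * z ^ d.val)
      = x ^ a.val * (z ^ b.val * x ^ c.val) * z ^ d.val := by simp only [mul_assoc]
    _ = AfAfConst (a, b) (c, d) • ((x ^ a.val * x ^ c.val) * (z ^ b.val * z ^ d.val)) := by
        rw [pow_val_mul_pow_val_of_anticomm hzx, mul_smul_comm, smul_mul_assoc]
        simp only [AfAfConst, mul_assoc]
    _ = _ := by
        rw [pow_val_mul_pow_val_of_mul_self_eq_one hx, pow_val_mul_pow_val_of_mul_self_eq_one hz]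
        rfl

end AnticommutingInvolutions

namespace Matrix

def pauliX : Matrix (Fin 2) (Fin 2) ℂ := !![0, 1; 1, 0]

def pauliZ : Matrix (Fin 2) (Fin 2) ℂ := !![1, 0; 0, -1]

theorem pauliX_mul_self : pauliX * pauliX = 1 := by
  ext i j; fin_cases i <;> fin_cases j <;> simp [pauliX]

theorem pauliZ_mul_self : pauliZ * pauliZ = 1 := by
  ext i j; fin_cases i <;> fin_cases j <;> simp [pauliZ]

theorem pauliZ_mul_pauliX : pauliZ * pauliX = -(pauliX * pauliZ) := by
  ext i j; fin_cases i <;> fin_cases j <;> simp [pauliX, pauliZ]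

end Matrix

open Matrix

theorem span_range_pauliFamily :
    Submodule.span ℂ (Set.range (anticommPairFamily pauliX pauliZ)) = ⊤ := by
  set F := anticommPairFamily pauliX pauliZ
  refine eq_top_iff.mpr fun M _ => ?_
  have pauli_coords : M = ((M 0 0 + M 1 1) / 2) • F (0, 0) + ((M 0 1 + M 1 0) / 2) • F (1, 0)
      + ((M 0 0 - M 1 1) / 2) • F (0, 1) + ((M 1 0 - M 0 1) / 2) • F (1, 1) := by
    ext i j
    fin_cases i <;> fin_cases j <;>
      · simp [F, anticommPairFamily, ZMod.val_one, pauliX, pauliZ]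
        ring
  have mem (p) : F p ∈ Submodule.span ℂ (Set.range F) := Submodule.subset_span ⟨p, rfl⟩
  rw [pauli_coords]
  exact add_mem (add_mem (add_mem (Submodule.smul_mem _ _ (mem _))
    (Submodule.smul_mem _ _ (mem _))) (Submodule.smul_mem _ _ (mem _)))
    (Submodule.smul_mem _ _ (mem _))

theorem linearIndependent_pauliFamily : LinearIndependent ℂ (anticommPairFamily pauliX pauliZ) :=
  linearIndependent_of_top_le_span_of_card_eq_finrank span_range_pauliFamily.ge
    (by simp [Module.finrank_matrix])

/-- for `A = 𝟙 ⊕ f` in `Vec_{ℤ/2×ℤ/2}` with the toric code braiding, the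
braided tensor product algebra `A ⊗ A` is isomorphic as an algebra to the 2×2 matrix
algebra `M₂(ℂ)` (via a family `F` of matrices realizing the structure constants and
forming a basis of `M₂(ℂ)`), its basis vectors are concentrated in the gradings
`{1, c}`, and hence `A ⊗ A` is Morita equivalent to the trivial algebra `𝟙 = ℂ`
(its category of modules is equivalent to that of `ℂ`). -/
theorem AfAf_iso_matrix_morita_trivial :
    (∃ F : ZMod 2 × ZMod 2 → Matrix (Fin 2) (Fin 2) ℂ,
      F 0 = 1 ∧
      (∀ p q, F p * F q = AfAfConst p q • F (p + q)) ∧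
      LinearIndependent ℂ F ∧
      Submodule.span ℂ (Set.range F) = ⊤) ∧
    (∀ p, AfAfGrade p ∈ ({0, (1, 1)} : Set (ZMod 2 × ZMod 2))) ∧
    Nonempty (ModuleCat.{0} (Matrix (Fin 2) (Fin 2) ℂ) ≌ ModuleCat.{0} ℂ) := by
  refine ⟨⟨anticommPairFamily pauliX pauliZ, by simp [anticommPairFamily],
    anticommPairFamily_mul pauliX_mul_self pauliZ_mul_self pauliZ_mul_pauliX,
    linearIndependent_pauliFamily, span_range_pauliFamily⟩, by decide,
    ⟨(ModuleCat.matrixEquivalence ℂ (0 : Fin 2)).symm⟩⟩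
end

section
/- Over the algebra A = 𝟙 ⊕ m in Vec_{ℤ/2×ℤ/2}, the relative tensor product of bimodules satisfies (e ⊕ f)₀ ⊗_A (𝟙 ⊕ m)₁ ≅ (e ⊕ f)₁ as A-A bimodules. -/
open TensorProduct

/-! Bimodules over `A = 𝟙 ⊕ m = ℂ[{1,b}]` in `Vec_{ℤ/2×ℤ/2}` (trivial associator).
Each of the bimodules `(e⊕f)₀`, `(𝟙⊕m)₁`, `(e⊕f)₁` has a 2-dimensional underlying space,
encoded as `ℤ/2 → ℂ`; the actions of the grade-`b` generator of `A` are either the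
untwisted translation (fusion-rule type) or its twist by `−1`. -/

/-- Common underlying space of the bimodules involved. -/
abbrev W14 := ZMod 2 → ℂ

/-- Untwisted (fusion-rule type) action of the grade-`x` element of `A`. -/
def regAct (x : ZMod 2) : W14 →ₗ[ℂ] W14 where
  toFun w := fun i => w (i + x)
  map_add' _ _ := rfl
  map_smul' _ _ := rfl

/-- Twisted action: the grade-`b` element acts by `−1` times the translation. -/
def twAct (x : ZMod 2) : W14 →ₗ[ℂ] W14 where
  toFun w := fun i => (if x = 1 then (-1 : ℂ) else 1) * w (i + x)
  map_add' _ _ := by funext; by_cases h : x = 1 <;> simp [h] <;> ring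
  map_smul' _ _ := by funext; by_cases h : x = 1 <;> simp [h] <;> ring

/-!
Let `χ` be the sign character of `ℤ/2` and `π (m ⊗ n) i = ∑ j, χ (i + j) * m (i + j) * n j`.
Since `χ x * χ x = 1`, `π` kills the balancing relations and intertwines the residual actions.
The relation of the grade-`j` generator against `δ₀` shows `m ⊗ δⱼ ≡ χ j • (m · j) ⊗ δ₀`, so
every tensor is congruent to one in `W ⊗ δ₀`, on which `π` is the invertible map `m ↦ χ • m`;
hence the kernel of `π` is exactly the span of the relations.
-/

theorem LinearMap.ker_eq_of_le_ker_of_sub_mem {R M N : Type*} [Ring R] [AddCommGroup M]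
    [Module R M] [AddCommGroup N] [Module R N] (f : M →ₗ[R] N) (g : N →ₗ[R] M)
    {S : Submodule R M} (hS : S ≤ LinearMap.ker f) (hg : ∀ y, y - g (f y) ∈ S) :
    LinearMap.ker f = S :=
  le_antisymm (fun y hy => by simpa [LinearMap.mem_ker.1 hy] using hg y) hS

def zmod2Sign (x : ZMod 2) : ℂ := if x = 1 then -1 else 1

lemma zmod2Sign_mul_self (x : ZMod 2) : zmod2Sign x * zmod2Sign x = 1 := by
  unfold zmod2Sign; split_ifs <;> norm_num

lemma zmod2Sign_add (x y : ZMod 2) : zmod2Sign (x + y) = zmod2Sign x * zmod2Sign y := by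
  obtain rfl | rfl : x = 0 ∨ x = 1 := by revert x; decide
  all_goals obtain rfl | rfl : y = 0 ∨ y = 1 := by revert y; decide
  all_goals simp [zmod2Sign, show (1 + 1 : ZMod 2) = 0 by decide]

lemma regAct_apply (x : ZMod 2) (w : W14) (i : ZMod 2) : regAct x w i = w (i + x) := rfl

lemma twAct_apply (x : ZMod 2) (w : W14) (i : ZMod 2) :
    twAct x w i = zmod2Sign x * w (i + x) := rfl

def signMul : W14 →ₗ[ℂ] W14 where
  toFun w i := zmod2Sign i * w i
  map_add' _ _ := by funext; simp [mul_add]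
  map_smul' _ _ := by funext; simp [mul_left_comm]

lemma signMul_apply (w : W14) (i : ZMod 2) : signMul w i = zmod2Sign i * w i := rfl

def relTensorMap : W14 ⊗[ℂ] W14 →ₗ[ℂ] W14 :=
  lift <| LinearMap.mk₂ ℂ (fun m n i => ∑ j, signMul m (i + j) * n j)
    (fun _ _ _ => by funext; simp [add_mul, Finset.sum_add_distrib])
    (fun _ _ _ => by funext; simp [Finset.mul_sum, mul_assoc])
    (fun _ _ _ => by funext; simp [mul_add, Finset.sum_add_distrib])
    (fun _ _ _ => by funext; simp [Finset.mul_sum, mul_left_comm])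

lemma relTensorMap_tmul_apply (m n : W14) (i : ZMod 2) :
    relTensorMap (m ⊗ₜ n) i = ∑ j, signMul m (i + j) * n j := rfl


lemma relTensorMap_tmul_twAct (x : ZMod 2) (m n : W14) :
    relTensorMap (m ⊗ₜ twAct x n) = relTensorMap (regAct x m ⊗ₜ n) := by
  funext i
  simp only [relTensorMap_tmul_apply]
  refine Fintype.sum_equiv (Equiv.addRight x) _ _ fun j => ?_
  simp only [Equiv.coe_addRight, twAct_apply, signMul_apply, regAct_apply, ← add_assoc,
    CharTwo.add_cancel_right, zmod2Sign_add]
  ring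

lemma relTensorMap_regAct_tmul (x : ZMod 2) (m n : W14) :
    relTensorMap (regAct x m ⊗ₜ n) = twAct x (relTensorMap (m ⊗ₜ n)) := by
  funext i
  simp only [relTensorMap_tmul_apply, twAct_apply, signMul_apply, regAct_apply, Finset.mul_sum]
  refine Finset.sum_congr rfl fun j _ => ?_
  rw [add_right_comm i x j]
  simp only [zmod2Sign_add]
  linear_combination (-(zmod2Sign i * zmod2Sign j * m (i + j + x) * n j)) * zmod2Sign_mul_self x

lemma relTensorMap_tmul_regAct (x : ZMod 2) (m n : W14) :
    relTensorMap (m ⊗ₜ regAct x n) = regAct x (relTensorMap (m ⊗ₜ n)) := by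
  funext i
  simp only [regAct_apply, relTensorMap_tmul_apply]
  refine Fintype.sum_equiv (Equiv.addRight x) _ _ fun j => ?_
  rw [Equiv.coe_addRight, add_add_add_comm i x j x, CharTwo.add_self_eq_zero, add_zero]

lemma signMul_signMul (w : W14) : signMul (signMul w) = w := by
  funext i
  simp only [signMul_apply, ← mul_assoc, zmod2Sign_mul_self, one_mul]

lemma signMul_regAct_signMul (x : ZMod 2) (w : W14) :
    signMul (regAct x (signMul w)) = zmod2Sign x • regAct x w := by
  funext i
  simp only [signMul_apply, regAct_apply, Pi.smul_apply, smul_eq_mul, zmod2Sign_add]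
  linear_combination zmod2Sign x * w (i + x) * zmod2Sign_mul_self i

lemma twAct_single_zero (x : ZMod 2) (c : ℂ) :
    twAct x (Pi.single 0 c) = zmod2Sign x • Pi.single x c := by
  funext i
  simp [twAct_apply, Pi.single_apply, add_eq_zero_iff_eq_neg, CharTwo.neg_eq]

lemma relTensorMap_tmul_single (m : W14) (j : ZMod 2) (c : ℂ) :
    relTensorMap (m ⊗ₜ Pi.single j c) = c • regAct j (signMul m) := by
  funext i
  simp [relTensorMap_tmul_apply, Pi.single_apply, regAct_apply, mul_comm]

def relTensorSection : W14 →ₗ[ℂ] W14 ⊗[ℂ] W14 :=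
  (TensorProduct.mk ℂ W14 W14).flip (Pi.single 0 1) ∘ₗ signMul

lemma relTensorSection_apply (w : W14) :
    relTensorSection w = signMul w ⊗ₜ Pi.single 0 1 := rfl

lemma relTensorMap_relTensorSection (w : W14) : relTensorMap (relTensorSection w) = w := by
  rw [relTensorSection_apply, relTensorMap_tmul_single, signMul_signMul, one_smul]
  exact funext fun i => by rw [regAct_apply, add_zero]

lemma relTensorSection_relTensorMap_tmul_single (m : W14) (j : ZMod 2) (c : ℂ) :
    relTensorSection (relTensorMap (m ⊗ₜ Pi.single j c)) =
      (zmod2Sign j • regAct j m) ⊗ₜ Pi.single 0 c := by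
  rw [relTensorMap_tmul_single, map_smul, relTensorSection_apply, signMul_regAct_signMul,
    ← tmul_smul, ← Pi.single_smul', smul_eq_mul, mul_one]

def balancingRelations : Submodule ℂ (W14 ⊗[ℂ] W14) :=
  Submodule.span ℂ {z | ∃ (x : ZMod 2) (m n : W14), z = regAct x m ⊗ₜ n - m ⊗ₜ twAct x n}

lemma balancingRelations_le_ker : balancingRelations ≤ LinearMap.ker relTensorMap := by
  rw [balancingRelations, Submodule.span_le]
  rintro _ ⟨x, m, n, rfl⟩
  rw [SetLike.mem_coe, LinearMap.mem_ker, map_sub, relTensorMap_tmul_twAct, sub_self]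

lemma tmul_single_sub_relTensorSection_mem (m : W14) (j : ZMod 2) (c : ℂ) :
    m ⊗ₜ Pi.single j c - relTensorSection (relTensorMap (m ⊗ₜ Pi.single j c)) ∈
      balancingRelations := by
  have hrel : regAct j m ⊗ₜ Pi.single 0 c - m ⊗ₜ twAct j (Pi.single 0 c) ∈ balancingRelations :=
    Submodule.subset_span ⟨j, m, Pi.single 0 c, rfl⟩
  convert (balancingRelations.smul_mem (-zmod2Sign j) hrel) using 1
  rw [relTensorSection_relTensorMap_tmul_single, twAct_single_zero, smul_sub, tmul_smul,
    smul_tmul', smul_smul, neg_mul, zmod2Sign_mul_self, neg_smul, neg_smul, one_smul, neg_tmul]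
  abel

lemma sub_relTensorSection_mem (y : W14 ⊗[ℂ] W14) :
    y - relTensorSection (relTensorMap y) ∈ balancingRelations := by
  induction y using TensorProduct.induction_on with
  | zero => simp
  | tmul m n =>
    rw [← Finset.univ_sum_single n, tmul_sum, map_sum, map_sum, ← Finset.sum_sub_distrib]
    exact Submodule.sum_mem _ fun j _ => tmul_single_sub_relTensorSection_mem m j (n j)
  | add y z hy hz =>
    rw [map_add, map_add, add_sub_add_comm]
    exact add_mem hy hz

/-- over `A = 𝟙 ⊕ m`, the relative tensor product
`(e⊕f)₀ ⊗_A (𝟙⊕m)₁ ≅ (e⊕f)₁` as `A`-`A` bimodules.  Here `(e⊕f)₀` has both actions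
untwisted, `(𝟙⊕m)₁` has untwisted right action and twisted left action, and `(e⊕f)₁`
has untwisted right action and twisted left action.  The relative tensor product is the
quotient of `(e⊕f)₀ ⊗ (𝟙⊕m)₁` by the span of the elements
`(m·a) ⊗ n − m ⊗ (a·n)`; the isomorphism is exhibited by a surjection `π` whose kernel
is exactly this span and which intertwines the residual left and right actions. -/
theorem relative_tensor_product_iso :
    ∃ π : W14 ⊗[ℂ] W14 →ₗ[ℂ] W14,
      Function.Surjective π ∧
      LinearMap.ker π = Submodule.span ℂ
        {z | ∃ (x : ZMod 2) (m n : W14), z = (regAct x m) ⊗ₜ[ℂ] n - m ⊗ₜ[ℂ] (twAct x n)} ∧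
      (∀ (x : ZMod 2) (m n : W14),
        π ((regAct x m) ⊗ₜ[ℂ] n) = twAct x (π (m ⊗ₜ[ℂ] n))) ∧
      (∀ (x : ZMod 2) (m n : W14),
        π (m ⊗ₜ[ℂ] (regAct x n)) = regAct x (π (m ⊗ₜ[ℂ] n))) :=
  ⟨relTensorMap, Function.RightInverse.surjective relTensorMap_relTensorSection,
    LinearMap.ker_eq_of_le_ker_of_sub_mem relTensorMap relTensorSection balancingRelations_le_ker
      sub_relTensorSection_mem,
    relTensorMap_regAct_tmul, relTensorMap_tmul_regAct⟩
end

section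
/- For the ℤ/4 chiral topological order: with braiding matrix c given by c_{σ_j,σ_k} = exp(iπ jk/4) for j,k ∈ {0,1,2,3}, the matrices S defined by S_{a,b} = (1/2)·c_{b⁻¹,a}·c_{a,b⁻¹} and T defined by T_{a,a} = c_{a,a} satisfy (ST)³ = exp(2πi/8)·S². -/
open Complex

/-- The braiding of the `ℤ/4` chiral topological order on simple objects `σ_j`:
`c_{σ_j,σ_k} = exp(iπjk/4)`. -/
noncomputable def z4Braiding (j k : ZMod 4) : ℂ :=
  Complex.exp (Real.pi * Complex.I * (j.val : ℂ) * (k.val : ℂ) / 4)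

/-- The `S`-matrix, `S_{a,b} = (1/2)·c_{b⁻¹,a}·c_{a,b⁻¹}`. -/
noncomputable def z4S : Matrix (ZMod 4) (ZMod 4) ℂ :=
  fun a b => (1 / 2 : ℂ) * z4Braiding (-b) a * z4Braiding a (-b)

/-- The `T`-matrix, diagonal with `T_{a,a} = θ_a = c_{a,a}`. -/
noncomputable def z4T : Matrix (ZMod 4) (ZMod 4) ℂ :=
  Matrix.diagonal fun a => z4Braiding a a

/-- The primitive eighth root of unity `ω = exp(iπ/4)`. -/
noncomputable def omg : ℂ := Complex.exp (Real.pi * Complex.I / 4)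

lemma z4Braiding_eq_omg_pow (j k : ZMod 4) : z4Braiding j k = omg ^ (j.val * k.val) := by
  rw [z4Braiding, omg, ← Complex.exp_nat_mul]; congr 1; push_cast; ring

lemma zmod4_sum (f : ZMod 4 → ℂ) : ∑ x, f x = f 0 + f 1 + f 2 + f 3 := Fin.sum_univ_four f

set_option maxHeartbeats 4000000 in
/-- the modular relation `(ST)³ = exp(2πi/8)·S²` holds for the `ℤ/4`
chiral topological order (chiral central charge `c = 1`). -/
theorem z4_modular_relation :
    (z4S * z4T) ^ 3 = Complex.exp (2 * Real.pi * Complex.I / 8) • z4S ^ 2 := by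
  have h4 : omg ^ 4 = -1 := by
    rw [omg, ← Complex.exp_nat_mul,
      show (4:ℕ) * (Real.pi * Complex.I / 4) = Real.pi * Complex.I by push_cast; ring]
    exact Complex.exp_pi_mul_I
  have hsc : Complex.exp (2 * Real.pi * Complex.I / 8) = omg := by rw [omg]; congr 1; ring
  have hc : ∀ x : ZMod 4, x = 0 ∨ x = 1 ∨ x = 2 ∨ x = 3 := by decide
  ext a b
  rw [pow_succ, pow_succ, pow_one, pow_two]
  rcases hc a with rfl | rfl | rfl | rfl <;> rcases hc b with rfl | rfl | rfl | rfl <;>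
    simp only [Matrix.mul_apply, Matrix.smul_apply, smul_eq_mul, z4S, z4T, Matrix.diagonal,
      Matrix.of_apply, z4Braiding_eq_omg_pow, hsc, zmod4_sum] <;>
    norm_num [show ((0:ZMod 4)).val = 0 from rfl, show ((1:ZMod 4)).val = 1 from rfl,
      show ((2:ZMod 4)).val = 2 from rfl, show ((3:ZMod 4)).val = 3 from rfl,
      show ((-0:ZMod 4)).val = 0 from rfl, show ((-1:ZMod 4)).val = 3 from rfl,
      show ((-2:ZMod 4)).val = 2 from rfl, show ((-3:ZMod 4)).val = 1 from rfl,
      show ((1:ZMod 4)) ≠ 0 from by decide, show ((2:ZMod 4)) ≠ 0 from by decide,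
      show ((3:ZMod 4)) ≠ 0 from by decide, show ((2:ZMod 4)) ≠ 1 from by decide,
      show ((3:ZMod 4)) ≠ 1 from by decide, show ((3:ZMod 4)) ≠ 2 from by decide,
      show ((0:ZMod 4)) ≠ 1 from by decide, show ((0:ZMod 4)) ≠ 2 from by decide,
      show ((0:ZMod 4)) ≠ 3 from by decide, show ((1:ZMod 4)) ≠ 2 from by decide,
      show ((1:ZMod 4)) ≠ 3 from by decide, show ((2:ZMod 4)) ≠ 3 from by decide]
  · linear_combination ((1/8 : ℂ) + (-3/4 : ℂ) * omg + (1/8 : ℂ) * omg ^ 4 + (3/4 : ℂ) * omg ^ 5 + (-3/8 : ℂ) * omg ^ 9 + (1/8 : ℂ) * omg ^ 12 + (3/8 : ℂ) * omg ^ 13 + (-1/8 : ℂ) * omg ^ 17 + (1/8 : ℂ) * omg ^ 21 + (1/8 : ℂ) * omg ^ 24) * h4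
  · linear_combination ((-1/8 : ℂ) * omg + (1/8 : ℂ) * omg ^ 2 + (1/4 : ℂ) * omg ^ 5 + (-1/8 : ℂ) * omg ^ 6 + (-1/4 : ℂ) * omg ^ 7 + (1/8 : ℂ) * omg ^ 8 + (-1/4 : ℂ) * omg ^ 9 + (1/4 : ℂ) * omg ^ 10 + (1/4 : ℂ) * omg ^ 11 + (-1/8 : ℂ) * omg ^ 12 + (-1/4 : ℂ) * omg ^ 14 + (-1/8 : ℂ) * omg ^ 15 + (1/8 : ℂ) * omg ^ 16 + (1/8 : ℂ) * omg ^ 17 + (1/4 : ℂ) * omg ^ 18 + (-1/8 : ℂ) * omg ^ 19 + (-1/8 : ℂ) * omg ^ 20 + (-1/8 : ℂ) * omg ^ 21 + (-1/8 : ℂ) * omg ^ 22 + (1/8 : ℂ) * omg ^ 23 + (1/4 : ℂ) * omg ^ 24 + (1/8 : ℂ) * omg ^ 25 + (1/8 : ℂ) * omg ^ 26 + (-1/8 : ℂ) * omg ^ 27 + (-1/8 : ℂ) * omg ^ 28 + (-1/8 : ℂ) * omg ^ 30 + (1/4 : ℂ) * omg ^ 31 + (1/8 : ℂ) * omg ^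 32 + (1/8 : ℂ) * omg ^ 34 + (-1/8 : ℂ) * omg ^ 35 + (1/8 : ℂ) * omg ^ 39) * h4
  · linear_combination ((-1/4 : ℂ) * omg + (1/8 : ℂ) * omg ^ 4 + (1/8 : ℂ) * omg ^ 5 + (-1/4 : ℂ) * omg ^ 9 + (1/8 : ℂ) * omg ^ 13 + (1/4 : ℂ) * omg ^ 16 + (-1/8 : ℂ) * omg ^ 17 + (-1/4 : ℂ) * omg ^ 20 + (1/4 : ℂ) * omg ^ 21 + (1/4 : ℂ) * omg ^ 24 + (1/8 : ℂ) * omg ^ 33 + (1/8 : ℂ) * omg ^ 36) * h4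
  · linear_combination ((-1/4 : ℂ) * omg + (-1/4 : ℂ) * omg ^ 3 + (1/8 : ℂ) * omg ^ 9 + (1/8 : ℂ) * omg ^ 10 + (1/8 : ℂ) * omg ^ 12 + (-1/8 : ℂ) * omg ^ 14 + (-1/8 : ℂ) * omg ^ 16 + (1/8 : ℂ) * omg ^ 17 + (1/4 : ℂ) * omg ^ 18 + (1/8 : ℂ) * omg ^ 19 + (1/8 : ℂ) * omg ^ 20 + (-1/8 : ℂ) * omg ^ 21 + (-1/8 : ℂ) * omg ^ 22 + (-1/8 : ℂ) * omg ^ 23 + (1/8 : ℂ) * omg ^ 25 + (1/8 : ℂ) * omg ^ 26 + (1/4 : ℂ) * omg ^ 27 + (1/8 : ℂ) * omg ^ 28 + (-1/8 : ℂ) * omg ^ 30 + (-1/4 : ℂ) * omg ^ 31 + (1/8 : ℂ) * omg ^ 34 + (1/4 : ℂ) * omg ^ 35) * h4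
  · linear_combination ((1/8 : ℂ) + (-1/8 : ℂ) * omg + (-1/4 : ℂ) * omg ^ 3 + (-1/8 : ℂ) * omg ^ 5 + (1/8 : ℂ) * omg ^ 7 + (1/8 : ℂ) * omg ^ 8 + (1/4 : ℂ) * omg ^ 9 + (-1/8 : ℂ) * omg ^ 12 + (-1/4 : ℂ) * omg ^ 13 + (1/8 : ℂ) * omg ^ 14 + (1/8 : ℂ) * omg ^ 15 + (1/8 : ℂ) * omg ^ 16 + (1/4 : ℂ) * omg ^ 17 + (-1/8 : ℂ) * omg ^ 19 + (1/8 : ℂ) * omg ^ 23 + (1/8 : ℂ) * omg ^ 26) * h4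
  · linear_combination ((-1/8 : ℂ) * omg + (1/8 : ℂ) * omg ^ 5 + (1/4 : ℂ) * omg ^ 8 + (-1/8 : ℂ) * omg ^ 12 + (-1/4 : ℂ) * omg ^ 13 + (1/8 : ℂ) * omg ^ 16 + (1/8 : ℂ) * omg ^ 17 + (-1/8 : ℂ) * omg ^ 20 + (-1/4 : ℂ) * omg ^ 21 + (1/8 : ℂ) * omg ^ 24 + (1/4 : ℂ) * omg ^ 25 + (1/4 : ℂ) * omg ^ 28 + (-1/4 : ℂ) * omg ^ 29 + (-1/4 : ℂ) * omg ^ 32 + (3/8 : ℂ) * omg ^ 33 + (1/4 : ℂ) * omg ^ 36 + (-1/8 : ℂ) * omg ^ 37 + (1/8 : ℂ) * omg ^ 41) * h4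
  · linear_combination ((-1/4 : ℂ) * omg + (1/8 : ℂ) * omg ^ 4 + (1/4 : ℂ) * omg ^ 5 + (-1/8 : ℂ) * omg ^ 8 + (-1/8 : ℂ) * omg ^ 9 + (-1/8 : ℂ) * omg ^ 11 + (1/4 : ℂ) * omg ^ 12 + (-1/8 : ℂ) * omg ^ 13 + (-1/8 : ℂ) * omg ^ 16 + (1/8 : ℂ) * omg ^ 17 + (1/8 : ℂ) * omg ^ 20 + (-1/8 : ℂ) * omg ^ 21 + (1/8 : ℂ) * omg ^ 22 + (-1/8 : ℂ) * omg ^ 24 + (1/4 : ℂ) * omg ^ 25 + (-1/8 : ℂ) * omg ^ 26 + (1/8 : ℂ) * omg ^ 27 + (1/8 : ℂ) * omg ^ 28 + (-1/8 : ℂ) * omg ^ 29 + (1/8 : ℂ) * omg ^ 30 + (-1/8 : ℂ) * omg ^ 31 + (1/8 : ℂ) * omg ^ 33 + (1/8 : ℂ) * omg ^ 35 + (1/8 : ℂ) * omg ^ 38) * h4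
  · linear_combination ((-1/4 : ℂ) * omg + (1/4 : ℂ) * omg ^ 5 + (-7/8 : ℂ) * omg ^ 9 + (1/8 : ℂ) * omg ^ 12 + (7/8 : ℂ) * omg ^ 13 + (-5/8 : ℂ) * omg ^ 17 + (1/8 : ℂ) * omg ^ 20 + (5/8 : ℂ) * omg ^ 21 + (-1/2 : ℂ) * omg ^ 25 + (1/8 : ℂ) * omg ^ 28 + (1/2 : ℂ) * omg ^ 29 + (-1/4 : ℂ) * omg ^ 33 + (1/8 : ℂ) * omg ^ 36 + (1/4 : ℂ) * omg ^ 37) * h4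
  · linear_combination ((1/8 : ℂ) + (-1/8 : ℂ) * omg + (-1/8 : ℂ) * omg ^ 5 + (1/8 : ℂ) * omg ^ 12 + (-1/8 : ℂ) * omg ^ 16 + (1/4 : ℂ) * omg ^ 20 + (1/8 : ℂ) * omg ^ 21 + (1/8 : ℂ) * omg ^ 25 + (1/8 : ℂ) * omg ^ 28) * h4
  · linear_combination ((-1/8 : ℂ) * omg + (1/8 : ℂ) * omg ^ 5 + (1/8 : ℂ) * omg ^ 8 + (-1/8 : ℂ) * omg ^ 9 + (-1/8 : ℂ) * omg ^ 12 + (1/4 : ℂ) * omg ^ 13 + (1/4 : ℂ) * omg ^ 14 + (1/8 : ℂ) * omg ^ 16 + (-1/8 : ℂ) * omg ^ 17 + (-1/4 : ℂ) * omg ^ 18 + (-1/4 : ℂ) * omg ^ 19 + (-1/8 : ℂ) * omg ^ 20 + (-1/8 : ℂ) * omg ^ 21 + (1/4 : ℂ) * omg ^ 22 + (1/8 : ℂ) * omg ^ 24 + (1/8 : ℂ) * omg ^ 25 + (-1/4 : ℂ) * omg ^ 26 + (1/8 : ℂ) * omg ^ 27 + (-1/8 : ℂ) * omg ^ 29 +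 (1/4 : ℂ) * omg ^ 30 + (-1/8 : ℂ) * omg ^ 31 + (1/8 : ℂ) * omg ^ 32 + (1/8 : ℂ) * omg ^ 33 + (-1/8 : ℂ) * omg ^ 34 + (1/8 : ℂ) * omg ^ 35 + (-1/8 : ℂ) * omg ^ 36 + (1/8 : ℂ) * omg ^ 38 + (1/8 : ℂ) * omg ^ 40 + (1/8 : ℂ) * omg ^ 43) * h4
  · linear_combination ((-1/4 : ℂ) * omg + (1/8 : ℂ) * omg ^ 4 + (1/4 : ℂ) * omg ^ 5 + (-1/8 : ℂ) * omg ^ 8 + (-1/8 : ℂ) * omg ^ 9 + (1/8 : ℂ) * omg ^ 12 + (1/8 : ℂ) * omg ^ 13 + (1/8 : ℂ) * omg ^ 16 + (-5/8 : ℂ) * omg ^ 17 + (-1/8 : ℂ) * omg ^ 20 + (5/8 : ℂ) * omg ^ 21 + (1/8 : ℂ) * omg ^ 24 + (-1/2 : ℂ) * omg ^ 25 + (1/2 : ℂ) * omg ^ 29 + (-1/4 : ℂ) * omg ^ 33 + (1/8 : ℂ) * omg ^ 36 + (1/4 : ℂ) * omg ^ 37 + (1/8 : ℂ) * omg ^ 40)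 * h4
  · linear_combination ((-1/4 : ℂ) * omg + (1/4 : ℂ) * omg ^ 5 + (-1/8 : ℂ) * omg ^ 9 + (-1/4 : ℂ) * omg ^ 11 + (1/8 : ℂ) * omg ^ 12 + (-1/8 : ℂ) * omg ^ 13 + (-1/8 : ℂ) * omg ^ 16 + (1/4 : ℂ) * omg ^ 17 + (1/8 : ℂ) * omg ^ 20 + (-1/8 : ℂ) * omg ^ 21 + (1/4 : ℂ) * omg ^ 22 + (1/8 : ℂ) * omg ^ 25 + (-1/4 : ℂ) * omg ^ 26 + (-1/8 : ℂ) * omg ^ 29 + (1/4 : ℂ) * omg ^ 30 + (1/8 : ℂ) * omg ^ 31 + (1/8 : ℂ) * omg ^ 33 + (-1/8 : ℂ) * omg ^ 34 + (-1/8 : ℂ) * omg ^ 35 + (1/8 : ℂ) * omg ^ 36 + (1/8 : ℂ) * omg ^ 38 + (1/4 : ℂ) * omg ^ 39) * h4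
  · linear_combination ((1/8 : ℂ) + (-1/8 : ℂ) * omg + (1/8 : ℂ) * omg ^ 5 + (-1/4 : ℂ) * omg ^ 7 + (1/4 : ℂ) * omg ^ 11 + (-1/4 : ℂ) * omg ^ 13 + (-1/8 : ℂ) * omg ^ 15 + (1/8 : ℂ) * omg ^ 16 + (1/4 : ℂ) * omg ^ 17 + (-1/8 : ℂ) * omg ^ 20 + (-1/4 : ℂ) * omg ^ 21 + (1/8 : ℂ) * omg ^ 24 + (1/4 : ℂ) * omg ^ 25 + (1/8 : ℂ) * omg ^ 26 + (1/8 : ℂ) * omg ^ 27 + (1/8 : ℂ) * omg ^ 30) * h4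
  · linear_combination ((-1/8 : ℂ) * omg + (1/8 : ℂ) * omg ^ 5 + (1/8 : ℂ) * omg ^ 8 + (-1/8 : ℂ) * omg ^ 9 + (-1/8 : ℂ) * omg ^ 12 + (1/8 : ℂ) * omg ^ 13 + (1/4 : ℂ) * omg ^ 16 + (1/8 : ℂ) * omg ^ 17 + (-1/8 : ℂ) * omg ^ 20 + (-1/8 : ℂ) * omg ^ 21 + (1/8 : ℂ) * omg ^ 24 + (-5/8 : ℂ) * omg ^ 25 + (5/8 : ℂ) * omg ^ 29 + (-1/2 : ℂ) * omg ^ 33 + (1/8 : ℂ) * omg ^ 36 + (1/2 : ℂ) * omg ^ 37 + (-1/4 : ℂ) * omg ^ 41 + (1/8 : ℂ) * omg ^ 44 + (1/4 : ℂ) * omg ^ 45) * h4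
  · linear_combination ((-1/4 : ℂ) * omg + (1/8 : ℂ) * omg ^ 4 + (1/4 : ℂ) * omg ^ 5 + (-1/8 : ℂ) * omg ^ 8 + (-1/8 : ℂ) * omg ^ 9 + (1/8 : ℂ) * omg ^ 12 + (1/8 : ℂ) * omg ^ 13 + (-1/8 : ℂ) * omg ^ 17 + (-1/8 : ℂ) * omg ^ 19 + (1/8 : ℂ) * omg ^ 20 + (-1/8 : ℂ) * omg ^ 21 + (-1/8 : ℂ) * omg ^ 24 + (1/4 : ℂ) * omg ^ 25 + (1/8 : ℂ) * omg ^ 28 + (-1/4 : ℂ) * omg ^ 29 + (-1/8 : ℂ) * omg ^ 32 + (1/4 : ℂ) * omg ^ 33 + (1/8 : ℂ) * omg ^ 34 + (1/8 : ℂ) * omg ^ 36 + (-1/8 : ℂ) * omg ^ 37 + (-1/8 : ℂ) * omg ^ 38 + (1/8 : ℂ) * omg ^ 39 + (1/8 : ℂ) * omg ^ 41 + (1/4 : ℂ) * omg ^ 42) * h4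
  · linear_combination ((-1/4 : ℂ) * omg + (1/4 : ℂ) * omg ^ 5 + (-1/8 : ℂ) * omg ^ 9 + (1/8 : ℂ) * omg ^ 12 + (-1/8 : ℂ) * omg ^ 13 + (-1/8 : ℂ) * omg ^ 16 + (1/8 : ℂ) * omg ^ 20 + (-1/4 : ℂ) * omg ^ 21 + (1/8 : ℂ) * omg ^ 24 + (3/8 : ℂ) * omg ^ 25 + (-3/8 : ℂ) * omg ^ 29 + (3/8 : ℂ) * omg ^ 33 + (-1/4 : ℂ) * omg ^ 37 + (1/4 : ℂ) * omg ^ 40 + (3/8 : ℂ) * omg ^ 41) * h4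
end
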